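/- arXiv:1201.2938 — 3 statements merged into one kernel-verified Lean document; each statement's English description precedes it below -/
import Mathlib

section
/- Let M = (M_k) be a log-convex sequence of positive reals with M_0 = 1, and suppose there is a constant C > 0 such that for all l ≥ 1 and all positive integers j_1,…,j_l with sum j, one has ∏_{i=1}^l M_{j_i}/j_i! ≤ C^j M_j/j!. Then the sequence k ↦ M_k^{1/k}/k (for k ≥ 1) is almost increasing, i.e., there is C' > 0 with M_k^{1/k}/k ≤ C' M_l^{1/l}/l for all 1 ≤ k < l. -/
/-!
Put `x n = M n / n ^ n`, so that `x n ^ (1 / n) = M n ^ (1 / n) / n`. Since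
`n ^ n / e ^ n ≤ n! ≤ n ^ n`, the hypothesis on compositions holds for `x` as well, with `C`
replaced by `C e`. For `k < l` write `l = (k + r) + q k` with `r < k` and apply it to the
composition `(k + r, k, …, k)`; log-convexity (`M a ^ b ≤ M b ^ a` for `a ≤ b`) bounds
`x k ^ (k + r)` by `2 ^ (k (k + r)) x (k + r) ^ k`. Together, `x k ^ l ≤ (2 C e) ^ (k l) x l ^ k`,
and taking `k l`-th roots gives the claim with `C' = 2 C e`.
-/

open Real Finset

lemma div_pow_self_le_div_factorial {m : ℝ} (hm : 0 ≤ m) (n : ℕ) :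
    m / (n : ℝ) ^ n ≤ m / n.factorial :=
  div_le_div_of_nonneg_left hm (by positivity) (by exact_mod_cast n.factorial_le_pow)

lemma div_factorial_le_exp_one_pow_mul_div_pow_self {m : ℝ} (hm : 0 ≤ m) (n : ℕ) :
    m / n.factorial ≤ exp 1 ^ n * (m / (n : ℝ) ^ n) := by
  have hn : (0 : ℝ) < (n : ℝ) ^ n := by exact_mod_cast Nat.pow_self_pos
  calc m / n.factorial = (n : ℝ) ^ n / n.factorial * (m / (n : ℝ) ^ n) := by field_simp
    _ ≤ exp n * (m / (n : ℝ) ^ n) := by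
      gcongr; exact Real.pow_div_factorial_le_exp _ n.cast_nonneg n
    _ = exp 1 ^ n * (m / (n : ℝ) ^ n) := by rw [exp_one_pow]

section LogConvex

variable {M : ℕ → ℝ}

lemma pow_succ_le_pow_of_logConvex (hpos : ∀ k, 0 < M k) (hM0 : M 0 = 1)
    (hlc : ∀ k, 1 ≤ k → M k ^ 2 ≤ M (k - 1) * M (k + 1)) (n : ℕ) :
    M n ^ (n + 1) ≤ M (n + 1) ^ n := by
  induction n with
  | zero => simp [hM0]
  | succ n ih =>
    have hsq : M (n + 1) ^ 2 ≤ M n * M (n + 2) := hlc (n + 1) (by omega)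
    have hn₂ := (hpos (n + 2)).le
    refine le_of_mul_le_mul_right ?_ (pow_pos (hpos (n + 1)) n)
    calc M (n + 1) ^ (n + 2) * M (n + 1) ^ n = (M (n + 1) ^ 2) ^ (n + 1) := by ring
      _ ≤ (M n * M (n + 2)) ^ (n + 1) := by gcongr
      _ = M n ^ (n + 1) * M (n + 2) ^ (n + 1) := mul_pow _ _ _
      _ ≤ M (n + 1) ^ n * M (n + 2) ^ (n + 1) := by gcongr
      _ = M (n + 2) ^ (n + 1) * M (n + 1) ^ n := mul_comm _ _

lemma pow_le_pow_of_logConvex (hpos : ∀ k, 0 < M k) (hM0 : M 0 = 1)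
    (hlc : ∀ k, 1 ≤ k → M k ^ 2 ≤ M (k - 1) * M (k + 1)) {a b : ℕ} (hab : a ≤ b) :
    M a ^ b ≤ M b ^ a := by
  rcases Nat.eq_zero_or_pos a with rfl | ha
  · simp [hM0]
  induction b, hab using Nat.le_induction with
  | base => rfl
  | succ b hab ih =>
    have ha' := (hpos a).le
    have hb := (hpos b).le
    refine le_of_pow_le_pow_left₀ (n := b) (by omega) (pow_nonneg (hpos _).le _) ?_
    calc (M a ^ (b + 1)) ^ b = (M a ^ b) ^ (b + 1) := by ring
      _ ≤ (M b ^ a) ^ (b + 1) := by gcongr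
      _ = (M b ^ (b + 1)) ^ a := by ring
      _ ≤ (M (b + 1) ^ b) ^ a := by gcongr; exact pow_succ_le_pow_of_logConvex hpos hM0 hlc b
      _ = (M (b + 1) ^ a) ^ b := by ring

lemma div_pow_self_pow_le_of_logConvex (hpos : ∀ k, 0 < M k) (hM0 : M 0 = 1)
    (hlc : ∀ k, 1 ≤ k → M k ^ 2 ≤ M (k - 1) * M (k + 1)) {a b : ℕ} (hab : a ≤ b)
    (hb : b ≤ 2 * a) :
    (M a / (a : ℝ) ^ a) ^ b ≤ 2 ^ (a * b) * (M b / (b : ℝ) ^ b) ^ a := by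
  rcases Nat.eq_zero_or_pos a with rfl | ha
  · obtain rfl : b = 0 := by omega
    simp
  have ha' : (0 : ℝ) < a := by exact_mod_cast ha
  have hb' : (0 : ℝ) < b := by exact_mod_cast ha.trans_le hab
  have hMb := (hpos b).le
  calc (M a / (a : ℝ) ^ a) ^ b = M a ^ b / (a : ℝ) ^ (a * b) := by rw [div_pow, ← pow_mul]
    _ ≤ M b ^ a / (a : ℝ) ^ (a * b) := by
      gcongr; exact pow_le_pow_of_logConvex hpos hM0 hlc hab
    _ = 2 ^ (a * b) * (M b ^ a / (2 * a : ℝ) ^ (a * b)) := by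
      rw [mul_pow]; field_simp
    _ ≤ 2 ^ (a * b) * (M b ^ a / (b : ℝ) ^ (a * b)) := by
      gcongr; exact_mod_cast hb
    _ = 2 ^ (a * b) * (M b / (b : ℝ) ^ b) ^ a := by rw [div_pow, ← pow_mul, mul_comm b a]

end LogConvex

lemma prod_div_pow_self_le_of_prod_div_factorial_le {M : ℕ → ℝ} (hpos : ∀ k, 0 < M k)
    {C : ℝ} (hC : 0 ≤ C)
    (hprod : ∀ l : ℕ, 1 ≤ l → ∀ j : Fin l → ℕ, (∀ i, 1 ≤ j i) →
      (∏ i, M (j i) / ((j i).factorial : ℝ)) ≤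
        C ^ (∑ i, j i) * (M (∑ i, j i) / ((∑ i, j i).factorial : ℝ)))
    (l : ℕ) (hl : 1 ≤ l) (j : Fin l → ℕ) (hj : ∀ i, 1 ≤ j i) :
    ∏ i, M (j i) / (j i : ℝ) ^ j i ≤
      (C * exp 1) ^ (∑ i, j i) * (M (∑ i, j i) / ((∑ i, j i : ℕ) : ℝ) ^ (∑ i, j i)) := by
  calc ∏ i, M (j i) / (j i : ℝ) ^ j i ≤ ∏ i, M (j i) / ((j i).factorial : ℝ) :=
        prod_le_prod (fun i _ => by have := hpos (j i); positivity)
          fun i _ => div_pow_self_le_div_factorial (hpos _).le _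
    _ ≤ C ^ (∑ i, j i) * (M (∑ i, j i) / ((∑ i, j i).factorial : ℝ)) := hprod l hl j hj
    _ ≤ _ := by
      rw [mul_pow, mul_assoc]
      gcongr
      exact div_factorial_le_exp_one_pow_mul_div_pow_self (hpos _).le _

section Compositions

variable {x : ℕ → ℝ} {D : ℝ}
  (hprod : ∀ l : ℕ, 1 ≤ l → ∀ j : Fin l → ℕ, (∀ i, 1 ≤ j i) →
    ∏ i, x (j i) ≤ D ^ (∑ i, j i) * x (∑ i, j i))
include hprod

lemma mul_pow_le_of_prod_le {a k : ℕ} (ha : 1 ≤ a) (hk : 1 ≤ k) (q : ℕ) :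
    x a * x k ^ q ≤ D ^ (a + q * k) * x (a + q * k) := by
  have h := hprod (q + 1) (by omega) (Fin.cons a fun _ => k) (Fin.cases ha fun _ => hk)
  simpa [Fin.prod_univ_succ, Fin.sum_univ_succ] using h

lemma pow_le_pow_mul_pow_of_prod_le {A : ℝ} (hx : ∀ n, 0 ≤ x n) (hA : 1 ≤ A)
    (hdouble : ∀ a b : ℕ, a ≤ b → b ≤ 2 * a → x a ^ b ≤ A ^ (a * b) * x b ^ a)
    {k l : ℕ} (hk : 1 ≤ k) (hkl : k ≤ l) : x k ^ l ≤ (A * D) ^ (k * l) * x l ^ k := by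
  obtain ⟨q, r, hr, rfl⟩ : ∃ q r, r < k ∧ l = k + r + q * k := by
    obtain ⟨q, hq⟩ : ∃ q, l / k = q + 1 :=
      ⟨l / k - 1, by have := Nat.div_pos hkl hk; omega⟩
    refine ⟨q, l % k, Nat.mod_lt _ hk, ?_⟩
    have := Nat.div_add_mod l k
    rw [hq] at this
    linarith
  have hxk := hx k
  have hxkr := hx (k + r)
  calc x k ^ (k + r + q * k) = x k ^ (k + r) * x k ^ (q * k) := pow_add _ _ _
    _ ≤ A ^ (k * (k + r)) * x (k + r) ^ k * x k ^ (q * k) := by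
      gcongr; exact hdouble k (k + r) (by omega) (by omega)
    _ = A ^ (k * (k + r)) * (x (k + r) * x k ^ q) ^ k := by ring
    _ ≤ A ^ (k * (k + r + q * k)) * (D ^ (k + r + q * k) * x (k + r + q * k)) ^ k := by
      gcongr A ^ ?_ * ?_ ^ k
      · exact Nat.mul_le_mul_left k (by omega)
      · exact mul_pow_le_of_prod_le hprod (by omega) hk q
    _ = (A * D) ^ (k * (k + r + q * k)) * x (k + r + q * k) ^ k := by ring

end Compositions

lemma rpow_one_div_div_pow {m : ℝ} (hm : 0 ≤ m) {n : ℕ} (hn : n ≠ 0) :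
    (m ^ ((1 : ℝ) / n) / n) ^ n = m / (n : ℝ) ^ n := by
  rw [div_pow, one_div, rpow_inv_natCast_pow hm hn]

/-- If `M` is log-convex with `M 0 = 1` and products over compositions satisfy
`∏ M (j i)/(j i)! ≤ C^j * M j / j!`, then `k ↦ (M k)^(1/k) / k` is almost increasing. -/
theorem almost_increasing_of_prod (M : ℕ → ℝ) (hpos : ∀ k, 0 < M k) (hM0 : M 0 = 1)
    (hlc : ∀ k, 1 ≤ k → (M k) ^ 2 ≤ M (k - 1) * M (k + 1))
    (C : ℝ) (hC : 0 < C)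
    (hprod : ∀ l : ℕ, 1 ≤ l → ∀ j : Fin l → ℕ, (∀ i, 1 ≤ j i) →
      (∏ i, M (j i) / ((j i).factorial : ℝ)) ≤
        C ^ (∑ i, j i) * (M (∑ i, j i) / ((∑ i, j i).factorial : ℝ))) :
    ∃ C' : ℝ, 0 < C' ∧ ∀ k l : ℕ, 1 ≤ k → k < l →
      (M k) ^ ((1 : ℝ) / k) / k ≤ C' * ((M l) ^ ((1 : ℝ) / l) / l) := by
  set x : ℕ → ℝ := fun n => M n / (n : ℝ) ^ n
  have hx : ∀ n, 0 ≤ x n := fun n => by have := hpos n; positivity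
  have hroot : ∀ n, 1 ≤ n → (M n ^ ((1 : ℝ) / n) / n) ^ n = x n :=
    fun n hn => rpow_one_div_div_pow (hpos n).le (by omega)
  refine ⟨2 * (C * exp 1), by positivity, fun k l hk hkl => ?_⟩
  have key : x k ^ l ≤ (2 * (C * exp 1)) ^ (k * l) * x l ^ k :=
    pow_le_pow_mul_pow_of_prod_le (prod_div_pow_self_le_of_prod_div_factorial_le hpos hC.le hprod)
      hx one_le_two (fun a b => div_pow_self_pow_le_of_logConvex hpos hM0 hlc) hk hkl.le
  have hMl := hpos l
  refine le_of_pow_le_pow_left₀ (n := k * l) (Nat.mul_ne_zero (by omega) (by omega))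
    (by positivity) ?_
  calc (M k ^ ((1 : ℝ) / k) / k) ^ (k * l) = x k ^ l := by rw [pow_mul, hroot k hk]
    _ ≤ (2 * (C * exp 1)) ^ (k * l) * x l ^ k := key
    _ = (2 * (C * exp 1) * (M l ^ ((1 : ℝ) / l) / l)) ^ (k * l) := by
      rw [mul_pow (2 * (C * exp 1)), pow_mul' (M l ^ _ / _), hroot l (by omega)]
end

section
/- Let M = (M_k) be a sequence of positive reals with M_0 = 1 such that lim_{k→∞} (M_k/k!)^{1/k} = ∞, and set v_M(r) = Σ_{k=0}^∞ (2πr)^k / M_k. Then for every ε > 0 there exists r_0 such that v_M(r) ≤ (1+ε)^r for all r ≥ r_0; in particular lim_{n→∞} v_M(n x)^{1/n} = 1 for every x ≥ 0 (the GRS condition). -/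
/-!
Growth of `(M k / k!)^(1/k)` to infinity gives, for every `C > 0`, a bound `C^k k! ≤ K M k`
for all `k`, hence `∑ y^k / M k ≤ K exp (y / C)`. So `v_M` grows more slowly than every
exponential `exp (δ r)`, while `v_M ≥ 1`; taking `n`-th roots of `v_M (n x)` squeezes them
to `1`.
-/

open Filter Topology Real Nat Asymptotics

theorem eventually_pow_mul_factorial_le {M : ℕ → ℝ} (hpos : ∀ k, 0 < M k)
    (hlim : Tendsto (fun k : ℕ => (M k / (k ! : ℝ)) ^ ((1 : ℝ) / k)) atTop atTop)
    {C : ℝ} (hC : 0 ≤ C) : ∀ᶠ k in atTop, C ^ k * k ! ≤ M k := by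
  filter_upwards [hlim.eventually_ge_atTop C, eventually_ne_atTop 0] with k hk hk0
  have hfac : (0 : ℝ) < k ! := by positivity
  have hroot : ((M k / k !) ^ ((1 : ℝ) / k)) ^ k = M k / k ! := by
    rw [one_div, rpow_inv_natCast_pow (div_pos (hpos k) hfac).le hk0]
  rw [← le_div_iff₀ hfac, ← hroot]
  exact pow_le_pow_left₀ hC hk k

theorem exists_pow_mul_factorial_le_mul {M : ℕ → ℝ} (hpos : ∀ k, 0 < M k)
    (hlim : Tendsto (fun k : ℕ => (M k / (k ! : ℝ)) ^ ((1 : ℝ) / k)) atTop atTop)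
    {C : ℝ} (hC : 0 ≤ C) : ∃ K, ∀ k, C ^ k * k ! ≤ K * M k := by
  have hO : (fun k : ℕ => C ^ k * (k ! : ℝ)) =O[atTop] M := by
    refine IsBigO.of_bound 1 ?_
    filter_upwards [eventually_pow_mul_factorial_le hpos hlim hC] with k hk
    rwa [norm_of_nonneg (by positivity), norm_of_nonneg (hpos k).le, one_mul]
  obtain ⟨K, -, hK⟩ := bound_of_isBigO_nat_atTop hO
  refine ⟨K, fun k => ?_⟩
  have hk := hK (hpos k).ne'
  rwa [norm_of_nonneg (by positivity), norm_of_nonneg (hpos k).le] at hk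

theorem pow_div_le_mul_pow_div_factorial {M : ℕ → ℝ} (hpos : ∀ k, 0 < M k)
    {C K : ℝ} (hC : 0 < C) (hK : ∀ k, C ^ k * k ! ≤ K * M k) {y : ℝ} (hy : 0 ≤ y) (k : ℕ) :
    y ^ k / M k ≤ K * ((y / C) ^ k / k !) :=
  calc y ^ k / M k = (y / C) ^ k / k ! * (C ^ k * k ! / M k) := by
        rw [div_pow]; field_simp
    _ ≤ (y / C) ^ k / k ! * K := by
        gcongr
        exact (div_le_iff₀ (hpos k)).2 (hK k)
    _ = K * ((y / C) ^ k / k !) := mul_comm _ _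

theorem summable_pow_div_of_le_mul {M : ℕ → ℝ} (hpos : ∀ k, 0 < M k)
    {C K : ℝ} (hC : 0 < C) (hK : ∀ k, C ^ k * k ! ≤ K * M k) {y : ℝ} (hy : 0 ≤ y) :
    Summable (fun k => y ^ k / M k) :=
  ((summable_pow_div_factorial (y / C)).mul_left K).of_nonneg_of_le
    (fun k => div_nonneg (pow_nonneg hy k) (hpos k).le)
    (pow_div_le_mul_pow_div_factorial hpos hC hK hy)

theorem tsum_pow_div_le_mul_exp {M : ℕ → ℝ} (hpos : ∀ k, 0 < M k)
    {C K : ℝ} (hC : 0 < C) (hK : ∀ k, C ^ k * k ! ≤ K * M k) {y : ℝ} (hy : 0 ≤ y) :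
    ∑' k, y ^ k / M k ≤ K * exp (y / C) := by
  have hexp := (NormedSpace.expSeries_div_hasSum_exp (y / C)).mul_left K
  rw [← exp_eq_exp_ℝ] at hexp
  exact hasSum_le (pow_div_le_mul_pow_div_factorial hpos hC hK hy)
    (summable_pow_div_of_le_mul hpos hC hK hy).hasSum hexp

theorem eventually_tsum_pow_div_le_exp {M : ℕ → ℝ} (hpos : ∀ k, 0 < M k)
    (hlim : Tendsto (fun k : ℕ => (M k / (k ! : ℝ)) ^ ((1 : ℝ) / k)) atTop atTop)
    {δ : ℝ} (hδ : 0 < δ) : ∀ᶠ y in atTop, ∑' k, y ^ k / M k ≤ exp (δ * y) := by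
  obtain ⟨K, hK⟩ := exists_pow_mul_factorial_le_mul hpos hlim (div_pos two_pos hδ).le
  have hgrow := tendsto_exp_atTop.comp (tendsto_id.const_mul_atTop (half_pos hδ))
  filter_upwards [eventually_ge_atTop 0, hgrow.eventually_ge_atTop K] with y hy hKy
  calc ∑' k, y ^ k / M k ≤ K * exp (y / (2 / δ)) :=
        tsum_pow_div_le_mul_exp hpos (div_pos two_pos hδ) hK hy
    _ = K * exp (δ / 2 * y) := by congr 2; field_simp
    _ ≤ exp (δ / 2 * y) * exp (δ / 2 * y) := by gcongr; exact hKy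
    _ = exp (δ * y) := by rw [← exp_add]; ring_nf

theorem tendsto_rpow_one_div_nat_mul {w : ℝ → ℝ} (hw1 : ∀ r, 0 ≤ r → 1 ≤ w r)
    (hsub : ∀ δ > 0, ∀ᶠ r in atTop, w r ≤ exp (δ * r)) {x : ℝ} (hx : 0 ≤ x) :
    Tendsto (fun n : ℕ => w (n * x) ^ ((1 : ℝ) / n)) atTop (𝓝 1) := by
  rcases hx.eq_or_lt with rfl | hx
  · simpa using tendsto_const_nhds.rpow tendsto_one_div_atTop_nhds_zero_nat
      (Or.inl (one_pos.trans_le (hw1 0 le_rfl)).ne')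
  refine tendsto_order.2 ⟨fun a ha => Eventually.of_forall fun n =>
    ha.trans_le (one_le_rpow (hw1 _ (by positivity)) (by positivity)), fun c hc => ?_⟩
  have hδ : 0 < log c / (2 * x) := div_pos (log_pos hc) (by positivity)
  have hnx : Tendsto (fun n : ℕ => (n : ℝ) * x) atTop atTop :=
    tendsto_natCast_atTop_atTop.atTop_mul_const hx
  filter_upwards [hnx.eventually (hsub _ hδ), eventually_ne_atTop 0] with n hn hn0
  calc w (n * x) ^ ((1 : ℝ) / n) ≤ exp (log c / (2 * x) * (n * x)) ^ ((1 : ℝ) / n) :=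
        rpow_le_rpow (zero_le_one.trans (hw1 _ (by positivity))) hn (by positivity)
    _ = exp (log c / 2) := by rw [← exp_mul]; congr 1; field_simp
    _ < exp (log c) := exp_lt_exp.2 (by linarith [log_pos hc])
    _ = c := exp_log (by linarith)

/-- If `lim (M k / k!)^(1/k) = ∞`, then `v_M r = ∑ (2πr)^k / M k` satisfies
`v_M r ≤ (1+ε)^r` for `r` large, and the GRS condition `lim v_M(n x)^(1/n) = 1`. -/
theorem assocWeight_GRS (M : ℕ → ℝ) (hpos : ∀ k, 0 < M k) (hM0 : M 0 = 1)
    (hlim : Tendsto (fun k : ℕ => (M k / (k.factorial : ℝ)) ^ ((1 : ℝ) / k)) atTop atTop) :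
    (∀ ε : ℝ, 0 < ε → ∃ r₀ : ℝ, ∀ r : ℝ, r₀ ≤ r →
        (∑' k : ℕ, (2 * Real.pi * r) ^ k / M k) ≤ (1 + ε) ^ r) ∧
      ∀ x : ℝ, 0 ≤ x →
        Tendsto (fun n : ℕ => (∑' k : ℕ, (2 * Real.pi * (n * x)) ^ k / M k) ^ ((1 : ℝ) / n))
          atTop (nhds 1) := by
  have hsub : ∀ δ > 0, ∀ᶠ r in atTop, ∑' k, (2 * π * r) ^ k / M k ≤ exp (δ * r) := by
    intro δ hδ
    filter_upwards [(tendsto_id.const_mul_atTop two_pi_pos).eventually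
      (eventually_tsum_pow_div_le_exp hpos hlim (div_pos hδ two_pi_pos))] with r hr
    rwa [id, ← mul_assoc, div_mul_cancel₀ _ two_pi_pos.ne'] at hr
  have hw1 : ∀ r : ℝ, 0 ≤ r → 1 ≤ ∑' k, (2 * π * r) ^ k / M k := by
    intro r hr
    obtain ⟨K, hK⟩ := exists_pow_mul_factorial_le_mul hpos hlim zero_le_one
    have hy : 0 ≤ 2 * π * r := by positivity
    simpa [hM0] using (summable_pow_div_of_le_mul hpos one_pos hK hy).le_tsum 0
      fun k _ => div_nonneg (pow_nonneg hy k) (hpos k).le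
  refine ⟨fun ε hε => ?_, fun x hx => tendsto_rpow_one_div_nat_mul hw1 hsub hx⟩
  obtain ⟨r₀, hr₀⟩ := eventually_atTop.1 (hsub _ (log_pos (by linarith : 1 < 1 + ε)))
  exact ⟨r₀, fun r hr => (hr₀ r hr).trans_eq (rpow_def_of_pos (by linarith) r).symm⟩
end

section
/- Let A be a unital (possibly noncommutative) algebra, δ a derivation on A, and a ∈ A invertible with δ(a^{-1}) = −a^{-1} δ(a) a^{-1}. Then for every n ≥ 1, δ^n(a^{-1}) equals the sum over m from 1 to n of (−1)^m times the sum over all ordered compositions n = k_1 + ⋯ + k_m with k_j ≥ 1, weighted by the multinomial coefficient n!/(k_1!⋯k_m!), of the product a^{-1} δ^{k_1}(a) a^{-1} δ^{k_2}(a) ⋯ a^{-1} δ^{k_m}(a) a^{-1}. -/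
open scoped BigOperators
open Finset

/-! Auxiliary material for the iterated quotient rule. -/

lemma iqr_sum_Icc_one {M : Type*} [AddCommMonoid M] (n : ℕ) (f : ℕ → M) :
    ∑ p ∈ Icc 1 n, f p = ∑ k ∈ range n, f (k+1) := by
  refine Finset.sum_nbij' (i := fun p => p - 1) (j := fun k => k + 1) ?_ ?_ ?_ ?_ ?_ <;>
    simp +contextual [Finset.mem_Icc, Finset.mem_range] <;> omega

lemma iqr_mult_cons (m : ℕ) (p : ℕ) (k' : Fin m → ℕ) :
    Nat.multinomial Finset.univ (Fin.cons p k' : Fin (m+1) → ℕ)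
      = (p + ∑ j, k' j).choose p * Nat.multinomial Finset.univ k' := by
  rw [Fin.univ_succ, Nat.multinomial_cons]
  congr 1
  · simp [Finset.sum_map]
  · unfold Nat.multinomial
    rw [Finset.sum_map, Finset.prod_map]
    simp

/-- Ordered compositions of `s` into `m` parts, each part in `[1, N]`. -/
def iqrComps (N s m : ℕ) : Finset (Fin m → ℕ) :=
  (Fintype.piFinset fun _ : Fin m => Finset.Icc 1 N).filter fun k => ∑ j, k j = s

lemma iqrComps_mem {N s m : ℕ} {k : Fin m → ℕ} :
    k ∈ iqrComps N s m ↔ (∀ j, 1 ≤ k j ∧ k j ≤ N) ∧ ∑ j, k j = s := by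
  simp [iqrComps, Fintype.mem_piFinset]

lemma iqrComps_part_le {N s m : ℕ} {k : Fin m → ℕ} (hk : k ∈ iqrComps N s m) (j : Fin m) :
    k j ≤ s := by
  obtain ⟨-, h2⟩ := iqrComps_mem.mp hk
  exact h2 ▸ Finset.single_le_sum (fun i _ => Nat.zero_le (k i)) (Finset.mem_univ j)

lemma iqrComps_congr {N N' s m : ℕ} (h : s ≤ N) (h' : s ≤ N') :
    iqrComps N s m = iqrComps N' s m := by
  ext k
  simp only [iqrComps_mem]
  constructor <;> rintro ⟨h1, h2⟩ <;> refine ⟨fun j => ⟨(h1 j).1, ?_⟩, h2⟩ <;>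
    calc k j ≤ s := h2 ▸ Finset.single_le_sum (fun i _ => Nat.zero_le (k i)) (Finset.mem_univ j)
    _ ≤ _ := by assumption

lemma iqrComps_eq_empty_of_lt {N s m : ℕ} (h : s < m) : iqrComps N s m = ∅ := by
  refine Finset.eq_empty_of_forall_notMem fun k hk => ?_
  obtain ⟨h1, h2⟩ := iqrComps_mem.mp hk
  have : m ≤ ∑ j, k j := by
    calc m = ∑ _j : Fin m, 1 := by simp
    _ ≤ ∑ j, k j := Finset.sum_le_sum fun j _ => (h1 j).1
  omega

lemma iqrComps_zero_parts {N s : ℕ} (h : 1 ≤ s) : iqrComps N s 0 = ∅ := by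
  refine Finset.eq_empty_of_forall_notMem fun k hk => ?_
  obtain ⟨-, h2⟩ := iqrComps_mem.mp hk
  simp at h2
  omega

lemma iqr_cons_split {M : Type*} [AddCommMonoid M] (s m : ℕ) (F : (Fin (m+1) → ℕ) → M) :
    ∑ k ∈ iqrComps s s (m+1), F k
      = ∑ p ∈ Icc 1 s, ∑ k' ∈ iqrComps s (s - p) m, F (Fin.cons p k') := by
  rw [← Finset.sum_sigma (Icc 1 s) (fun p => iqrComps s (s - p) m)
    (fun x => F (Fin.cons x.1 x.2))]
  refine Finset.sum_nbij' (i := fun k => ⟨k 0, Fin.tail k⟩) (j := fun x => Fin.cons x.1 x.2)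
    ?_ ?_ ?_ ?_ ?_
  · intro k hk
    obtain ⟨h1, h2⟩ := iqrComps_mem.mp hk
    rw [Fin.sum_univ_succ] at h2
    refine Finset.mem_sigma.mpr ⟨?_, ?_⟩
    · exact Finset.mem_Icc.mpr ⟨(h1 0).1, iqrComps_part_le hk 0⟩
    · refine iqrComps_mem.mpr ⟨fun j => h1 j.succ, ?_⟩
      simp only [Fin.tail]
      omega
  · intro x hx
    obtain ⟨hp, hk'⟩ := Finset.mem_sigma.mp hx
    rw [Finset.mem_Icc] at hp
    obtain ⟨h1, h2⟩ := iqrComps_mem.mp hk'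
    refine iqrComps_mem.mpr ⟨fun j => ?_, ?_⟩
    · refine Fin.cases ?_ ?_ j
      · simpa using hp
      · intro i; simpa using h1 i
    · rw [Fin.sum_univ_succ]
      simp only [Fin.cons_zero, Fin.cons_succ]
      omega
  · intro k _; simp [Fin.cons_self_tail]
  · intro x _; simp [Fin.tail_cons]
  · intro k _; rw [Fin.cons_self_tail]

section

variable {𝕜 : Type*} [Field 𝕜] {A : Type*} [Ring A] [Algebra 𝕜 A]

lemma iqr_leib_iter (δ : A →ₗ[𝕜] A) (hleib : ∀ x y : A, δ (x * y) = x * δ y + δ x * y)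
    (x y : A) (n : ℕ) : (⇑δ)^[n] (x * y) =
      ∑ k ∈ Finset.range (n+1), (n.choose k) • ((⇑δ)^[k] x * (⇑δ)^[n-k] y) := by
  induction n with
  | zero => simp
  | succ n ih =>
    rw [Function.iterate_succ_apply', ih, map_sum]
    have hterm : ∀ k ∈ Finset.range (n+1),
        δ ((n.choose k) • ((⇑δ)^[k] x * (⇑δ)^[n-k] y))
          = (n.choose k) • ((⇑δ)^[k] x * (⇑δ)^[(n-k)+1] y)
            + (n.choose k) • ((⇑δ)^[k+1] x * (⇑δ)^[n-k] y) := by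
      intro k _
      rw [map_nsmul, hleib, smul_add, Function.iterate_succ_apply', Function.iterate_succ_apply']
    rw [Finset.sum_congr rfl hterm, Finset.sum_add_distrib]
    have hS1 : ∑ k ∈ range (n+1), (n.choose k) • ((⇑δ)^[k] x * (⇑δ)^[(n-k)+1] y)
        = x * (⇑δ)^[n+1] y
          + ∑ k ∈ range (n+1), (n.choose (k+1)) • ((⇑δ)^[k+1] x * (⇑δ)^[(n+1)-(k+1)] y) := by
      rw [Finset.sum_range_succ' (fun k => (n.choose k) • ((⇑δ)^[k] x * (⇑δ)^[(n-k)+1] y)) n]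
      rw [Finset.sum_range_succ (fun k => (n.choose (k+1)) • ((⇑δ)^[k+1] x * (⇑δ)^[(n+1)-(k+1)] y)) n]
      simp only [Nat.choose_succ_self, zero_smul, add_zero, Nat.sub_zero, Nat.choose_zero_right,
        one_smul, Function.iterate_zero_apply]
      rw [add_comm]
      congr 1
      refine Finset.sum_congr rfl fun k hk => ?_
      have h1 : n - (k+1) + 1 = n + 1 - (k+1) := by
        have := Finset.mem_range.mp hk; omega
      rw [h1]
    rw [hS1]
    rw [Finset.sum_range_succ' (fun k => ((n+1).choose k) • ((⇑δ)^[k] x * (⇑δ)^[(n+1)-k] y)) (n+1)]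
    simp only [Nat.choose_zero_right, one_smul, Function.iterate_zero_apply, Nat.sub_zero]
    have hAB : (∑ k ∈ range (n+1), (n.choose (k+1)) • ((⇑δ)^[k+1] x * (⇑δ)^[(n+1)-(k+1)] y))
        + ∑ k ∈ range (n+1), (n.choose k) • ((⇑δ)^[k+1] x * (⇑δ)^[n-k] y)
        = ∑ k ∈ range (n+1), ((n+1).choose (k+1)) • ((⇑δ)^[k+1] x * (⇑δ)^[(n+1)-(k+1)] y) := by
      rw [← Finset.sum_add_distrib]
      refine Finset.sum_congr rfl fun k hk => ?_
      have hk' : k < n + 1 := Finset.mem_range.mp hk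
      have h2 : n - k = (n+1) - (k+1) := by omega
      rw [h2, Nat.choose_succ_succ, ← add_smul, add_comm (n.choose (k+1))]
    rw [← hAB]
    abel

def iqrTerm (δ : A →ₗ[𝕜] A) (a : Aˣ) (m : ℕ) (k : Fin m → ℕ) : A :=
  ((-1 : ℤ) ^ m * (Nat.multinomial Finset.univ k : ℤ)) •
    ((List.ofFn fun j : Fin m => (↑a⁻¹ : A) * (⇑δ)^[k j] (↑a : A)).prod * (↑a⁻¹ : A))

def iqrRHS (δ : A →ₗ[𝕜] A) (a : Aˣ) (n : ℕ) : A :=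
  if n = 0 then (↑a⁻¹ : A) else ∑ m ∈ Icc 1 n, ∑ k ∈ iqrComps n n m, iqrTerm δ a m k

lemma iqrTerm_cons (δ : A →ₗ[𝕜] A) (a : Aˣ) (m p s : ℕ) (k' : Fin m → ℕ)
    (hps : p ≤ s) (hsum : ∑ j, k' j = s - p) :
    iqrTerm δ a (m+1) (Fin.cons p k')
      = (s.choose p : ℤ) • (-((↑a⁻¹ : A) * (⇑δ)^[p] (↑a : A) * iqrTerm δ a m k')) := by
  unfold iqrTerm
  rw [iqr_mult_cons, hsum, Nat.add_sub_cancel' hps]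
  rw [List.ofFn_succ]
  simp only [Fin.cons_zero, Fin.cons_succ, List.prod_cons]
  rw [mul_smul_comm, ← neg_smul, smul_smul,
    mul_assoc ((↑a⁻¹ : A) * (⇑δ)^[p] (↑a : A))]
  congr 1
  push_cast; ring

lemma iqrV_eq (δ : A →ₗ[𝕜] A) (a : Aˣ) {N s : ℕ} (h : s < N) :
    (∑ m ∈ range N, ∑ k ∈ iqrComps N s m, iqrTerm δ a m k) = iqrRHS δ a s := by
  rcases Nat.eq_zero_or_pos s with hs | hs
  · subst hs
    rw [iqrRHS, if_pos rfl]
    rw [Finset.sum_eq_single_of_mem 0 (Finset.mem_range.mpr h)]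
    · have huniv : iqrComps N 0 0 = Finset.univ := by
        ext k
        simp only [iqrComps_mem, Finset.mem_univ, iff_true]
        exact ⟨fun j => j.elim0, by simp⟩
      rw [huniv, Finset.univ_unique, Finset.sum_singleton]
      simp [iqrTerm]
    · intro m _ hm0
      rw [iqrComps_eq_empty_of_lt (by omega)]
      simp
  · rw [iqrRHS, if_neg (by omega)]
    have hsub : Icc 1 s ⊆ range N := by
      intro m hm
      rw [Finset.mem_Icc] at hm
      exact Finset.mem_range.mpr (by omega)
    have hzero : ∀ m ∈ range N, m ∉ Icc 1 s → (∑ k ∈ iqrComps N s m, iqrTerm δ a m k) = 0 := by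
      intro m _ hm
      rw [Finset.mem_Icc] at hm
      rcases Nat.eq_zero_or_pos m with h0 | h1
      · subst h0; rw [iqrComps_zero_parts hs]; simp
      · rw [iqrComps_eq_empty_of_lt (by omega)]; simp
    rw [← Finset.sum_subset hsub hzero]
    exact Finset.sum_congr rfl fun m _ => by rw [iqrComps_congr (le_of_lt h) le_rfl]

lemma iqr_key (δ : A →ₗ[𝕜] A) (a : Aˣ) (n : ℕ) (hn : 1 ≤ n) :
    iqrRHS δ a n = ∑ k ∈ range n, ((n.choose (k+1) : ℤ)) •
      (-((↑a⁻¹ : A) * (⇑δ)^[k+1] (↑a : A) * iqrRHS δ a (n - (k+1)))) := by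
  rw [iqrRHS, if_neg (by omega)]
  rw [iqr_sum_Icc_one]
  have step : ∀ m' ∈ range n, (∑ k ∈ iqrComps n n (m'+1), iqrTerm δ a (m'+1) k)
      = ∑ p ∈ Icc 1 n, ∑ k' ∈ iqrComps n (n-p) m', iqrTerm δ a (m'+1) (Fin.cons p k') :=
    fun m' _ => iqr_cons_split n m' _
  rw [Finset.sum_congr rfl step, Finset.sum_comm]
  rw [iqr_sum_Icc_one]
  refine Finset.sum_congr rfl fun p hp => ?_
  have hp' : p < n := Finset.mem_range.mp hp
  have hterm : ∀ m' ∈ range n, ∀ k' ∈ iqrComps n (n-(p+1)) m',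
      iqrTerm δ a (m'+1) (Fin.cons (p+1) k')
        = (n.choose (p+1) : ℤ) • (-((↑a⁻¹ : A) * (⇑δ)^[p+1] (↑a : A) * iqrTerm δ a m' k')) := by
    intro m' _ k' hk'
    exact iqrTerm_cons δ a m' (p+1) n k' (by omega) (iqrComps_mem.mp hk').2
  rw [show iqrRHS δ a (n - (p+1)) =
      ∑ m' ∈ range n, ∑ k' ∈ iqrComps n (n-(p+1)) m', iqrTerm δ a m' k' from
    (iqrV_eq δ a (show n - (p+1) < n by omega)).symm]
  rw [Finset.sum_congr rfl fun m' hm' => Finset.sum_congr rfl (hterm m' hm')]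
  simp only [Finset.mul_sum, ← Finset.sum_neg_distrib, Finset.smul_sum]

lemma iqr_main (δ : A →ₗ[𝕜] A) (hleib : ∀ x y : A, δ (x * y) = x * δ y + δ x * y)
    (a : Aˣ) : ∀ n : ℕ, (⇑δ)^[n] (↑a⁻¹ : A) = iqrRHS δ a n := by
  intro n
  induction n using Nat.strong_induction_on with
  | _ n ih =>
    match n with
    | 0 => simp [iqrRHS]
    | (n+1) =>
      have hδ1 : δ (1 : A) = 0 := by
        have h2 : δ (1 : A) = δ 1 + δ 1 := by
          have := hleib 1 1
          simpa using this
        exact (left_eq_add.mp h2)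
      have h1 : (⇑δ)^[n+1] ((↑a : A) * ↑a⁻¹) = 0 := by
        rw [Units.mul_inv, Function.iterate_succ_apply, hδ1]
        exact Function.iterate_fixed (map_zero δ) n
      have h2 := iqr_leib_iter δ hleib (↑a : A) (↑a⁻¹ : A) (n+1)
      rw [h1, Finset.sum_range_succ'
        (fun k => ((n+1).choose k) • ((⇑δ)^[k] (↑a : A) * (⇑δ)^[(n+1)-k] (↑a⁻¹ : A))) (n+1)] at h2
      simp only [Nat.choose_zero_right, one_smul, Function.iterate_zero_apply, Nat.sub_zero] at h2
      have h4 : (↑a : A) * (⇑δ)^[n+1] (↑a⁻¹ : A)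
          = -∑ k ∈ range (n+1),
              ((n+1).choose (k+1)) • ((⇑δ)^[k+1] (↑a : A) * (⇑δ)^[(n+1)-(k+1)] (↑a⁻¹ : A)) :=
        eq_neg_of_add_eq_zero_right h2.symm
      calc (⇑δ)^[n+1] (↑a⁻¹ : A)
          = (↑a⁻¹ : A) * ((↑a : A) * (⇑δ)^[n+1] (↑a⁻¹ : A)) :=
            (Units.inv_mul_cancel_left a _).symm
        _ = ∑ k ∈ range (n+1), (((n+1).choose (k+1) : ℤ)) •
              (-((↑a⁻¹ : A) * (⇑δ)^[k+1] (↑a : A) * iqrRHS δ a ((n+1) - (k+1)))) := by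
            rw [h4, mul_neg, Finset.mul_sum, ← Finset.sum_neg_distrib]
            refine Finset.sum_congr rfl fun k hk => ?_
            have hih : (⇑δ)^[(n+1)-(k+1)] (↑a⁻¹ : A) = iqrRHS δ a ((n+1)-(k+1)) :=
              ih _ (by omega)
            rw [hih, natCast_zsmul, smul_neg, mul_smul_comm, mul_assoc]
        _ = iqrRHS δ a (n+1) := (iqr_key δ a (n+1) (by omega)).symm

end

/-- Iterated quotient rule for a single derivation: `δ^n(a⁻¹)` equals the sum over
`m` and over ordered compositions `n = k₁ + ⋯ + k_m` with `k_j ≥ 1`, weighted by the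
multinomial coefficient `n!/(k₁!⋯k_m!)` and sign `(-1)^m`, of
`a⁻¹ δ^{k₁}(a) a⁻¹ ⋯ a⁻¹ δ^{k_m}(a) a⁻¹`. -/
theorem iterated_quotient_rule {𝕜 : Type*} [Field 𝕜] {A : Type*} [Ring A] [Algebra 𝕜 A]
    (δ : A →ₗ[𝕜] A) (hleib : ∀ x y : A, δ (x * y) = x * δ y + δ x * y)
    (a : Aˣ) (hquot : δ (↑a⁻¹ : A) = -((↑a⁻¹ : A) * δ ↑a * ↑a⁻¹))
    (n : ℕ) (hn : 1 ≤ n) :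
    (⇑δ)^[n] (↑a⁻¹ : A) =
      ∑ m ∈ Finset.Icc 1 n,
        ∑ k ∈ (Fintype.piFinset fun _ : Fin m => Finset.Icc 1 n).filter
            (fun k => ∑ j, k j = n),
          ((-1 : ℤ) ^ m * (Nat.multinomial Finset.univ k : ℤ)) •
            ((List.ofFn fun j : Fin m => (↑a⁻¹ : A) * (⇑δ)^[k j] (↑a : A)).prod *
              (↑a⁻¹ : A)) := by
  rw [iqr_main δ hleib a n, iqrRHS, if_neg (by omega)]
  rfl
end
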